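/- Let λ = (λ_1,...,λ_n) be a partition and a_j = λ_1 + ... + λ_j. Then the principal Borel symmetric strongly shifted ideal Sss({λ}) admits the decomposition Sss({λ}) = ∩_{j=1}^n ∩_{σ ∈ 𝔖_n} σ((x_1,...,x_j))^{a_j}. -/

import Mathlib

/-!
A monomial `x^b` lies in `σ((x_1,…,x_j))^{a_j}` iff the entries of `b` at the positions
`σ(1),…,σ(j)` add up to at least `a_j`. So the intersection is the monomial ideal of the exponents
whose sorted partial sums dominate those of `λ`; it is symmetric and closed under Borel moves, hence
contains `Sss({λ})`. Conversely, every sorted exponent `μ` whose partial sums dominate those of `λ`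
is reached from `λ` by multiplications by variables and Borel moves through such exponents.
Going down from `μ`: let `k` be the first position with `λ_k < μ_k`; if some partial sum from `k`
on is tight, undo a Borel move from `k` to the first tight position `j`, otherwise divide by `x_k`.
-/

open MvPolynomial

/-- The monomial `x^a` in `K[x_1,...,x_n]`. -/
noncomputable def mon (K : Type) [Field K] (n : ℕ) (a : Fin n → ℕ) :
    MvPolynomial (Fin n) K :=
  monomial (Finsupp.equivFunOnFinite.symm a) 1

/-- A monomial ideal: an ideal generated by monomials. -/
def IsMonomialIdeal (K : Type) [Field K] (n : ℕ)
    (I : Ideal (MvPolynomial (Fin n) K)) : Prop :=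
  ∃ S : Set (Fin n → ℕ), I = Ideal.span (mon K n '' S)

/-- A symmetric (`𝔖_n`-fixed) ideal. -/
def IsSymmetricIdeal (K : Type) [Field K] (n : ℕ)
    (I : Ideal (MvPolynomial (Fin n) K)) : Prop :=
  ∀ σ : Equiv.Perm (Fin n), Ideal.map (rename (σ : Fin n → Fin n)) I = I

/-- The exponent vector obtained from `a` by the Borel move `x^a ↦ x^a · x_i / x_j`. -/
def borelMoveVec (n : ℕ) (a : Fin n → ℕ) (i j : Fin n) : Fin n → ℕ :=
  fun k => if k = i then a k + 1 else if k = j then a k - 1 else a k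

/-- A symmetric strongly shifted ideal (sssi). -/
def IsSSSI (K : Type) [Field K] (n : ℕ)
    (I : Ideal (MvPolynomial (Fin n) K)) : Prop :=
  IsMonomialIdeal K n I ∧ IsSymmetricIdeal K n I ∧
    ∀ lam : Fin n → ℕ, Monotone lam → mon K n lam ∈ I →
      ∀ i j : Fin n, i < j → lam i < lam j →
        mon K n (borelMoveVec n lam i j) ∈ I

/-- The dominance order on partitions: `μ ⊴ λ`. -/
def dominates (n : ℕ) (μ lam : Fin n → ℕ) : Prop :=
  ∀ k : Fin n, ∑ i ∈ Finset.Ici k, μ i ≤ ∑ i ∈ Finset.Ici k, lam i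

/-- `Sss(B)`: the smallest symmetric strongly shifted ideal containing the
monomials `x^λ`, `λ ∈ B`. -/
noncomputable def Sss (K : Type) [Field K] (n : ℕ) (B : Set (Fin n → ℕ)) :
    Ideal (MvPolynomial (Fin n) K) :=
  sInf {J | IsSSSI K n J ∧ ∀ lam ∈ B, mon K n lam ∈ J}

open Finset

namespace MvPolynomial

variable {σ R : Type*} [CommSemiring R]

theorem monomial_one_mem_span_X_pow (S : Finset σ) (d : σ →₀ ℕ) :
    monomial d (1 : R) ∈ Ideal.span (X '' (S : Set σ)) ^ (∑ i ∈ S, d i) := by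
  classical
  induction d using Finsupp.induction with
  | zero => simp
  | single_add a b f _ _ ih =>
    rw [monomial_single_add]
    simp only [Finsupp.coe_add, Pi.add_apply, sum_add_distrib, Finsupp.single_apply, sum_ite_eq]
    split_ifs with ha
    · rw [pow_add]
      exact Ideal.mul_mem_mul
        (Ideal.pow_mem_pow (Ideal.subset_span (Set.mem_image_of_mem X ha)) b) ih
    · simpa using Ideal.mul_mem_left _ _ ih

theorem span_X_pow_eq (S : Finset σ) (m : ℕ) :
    Ideal.span (X '' (S : Set σ)) ^ m =
      Ideal.span ((fun d => monomial d (1 : R)) '' {d | m ≤ ∑ i ∈ S, d i}) := by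
  classical
  refine le_antisymm ?_ (Ideal.span_le.mpr ?_)
  · induction m with
    | zero =>
      rw [pow_zero, Ideal.one_eq_top, top_le_iff, Ideal.eq_top_iff_one]
      exact Ideal.subset_span ⟨0, Nat.zero_le _, by simp⟩
    | succ m ih =>
      rw [pow_succ]
      refine (Ideal.mul_mono_left ih).trans ?_
      rw [Ideal.span_mul_span']
      refine Ideal.span_mono ?_
      rintro _ ⟨_, ⟨d, hd, rfl⟩, _, ⟨i, hi, rfl⟩, rfl⟩
      refine ⟨d + Finsupp.single i 1, ?_, by simp [X, monomial_mul]⟩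
      simpa [sum_add_distrib, Finsupp.single_apply, mem_coe.mp hi] using hd
  · rintro _ ⟨d, hd, rfl⟩
    exact Ideal.pow_le_pow_right hd (monomial_one_mem_span_X_pow S d)

theorem mem_span_X_pow_iff {S : Finset σ} {m : ℕ} {f : MvPolynomial σ R} :
    f ∈ Ideal.span (X '' (S : Set σ)) ^ m ↔ ∀ d ∈ f.support, m ≤ ∑ i ∈ S, d i := by
  rw [span_X_pow_eq, mem_ideal_span_monomial_image]
  refine forall₂_congr fun d _ => ⟨?_, fun hd => ⟨d, hd, le_rfl⟩⟩
  rintro ⟨e, he, hed⟩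
  exact he.trans (sum_le_sum fun i _ => hed i)

end MvPolynomial

theorem Finset.sum_Iic_le_sum_of_card_eq {α M : Type*} [LinearOrder α] [LocallyFiniteOrderBot α]
    [AddCommMonoid M] [PartialOrder M] [IsOrderedAddMonoid M] {f : α → M} (hf : Monotone f)
    (j : α) {T : Finset α} (hT : #T = #(Iic j)) :
    ∑ i ∈ Iic j, f i ≤ ∑ i ∈ T, f i := by
  classical
  calc ∑ i ∈ Iic j, f i
      ≤ ∑ i ∈ Iic j ∩ T, f i + #(Iic j \ T) • f j := by
        rw [← sum_inter_add_sum_sdiff (Iic j) T]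
        gcongr
        exact sum_le_card_nsmul _ _ _ fun x hx => hf (mem_Iic.mp (mem_sdiff.mp hx).1)
    _ = ∑ i ∈ T ∩ Iic j, f i + #(T \ Iic j) • f j := by
        rw [inter_comm, card_sdiff_comm hT.symm]
    _ ≤ ∑ i ∈ T, f i := by
        rw [← sum_inter_add_sum_sdiff T (Iic j)]
        gcongr
        refine card_nsmul_le_sum _ _ _ fun x hx => hf (le_of_lt ?_)
        simpa using (mem_sdiff.mp hx).2

theorem monotone_add_pi_single {α : Type*} [PartialOrder α] [DecidableEq α] {f : α → ℕ}
    (hf : Monotone f) {k : α} (hk : ∀ t, k < t → f k < f t) :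
    Monotone (f + Pi.single k 1) := by
  intro a b hab
  rcases eq_or_ne a b with rfl | hne
  · exact le_rfl
  by_cases ha : a = k
  · subst ha
    have := hk b (lt_of_le_of_ne hab hne)
    simp [hne.symm]
    omega
  · simpa [Pi.single_apply, ha] using le_add_right (hf hab)

theorem monotone_sub_pi_single {α : Type*} [PartialOrder α] [DecidableEq α] {f : α → ℕ}
    (hf : Monotone f) {k : α} (hk : ∀ t < k, f t < f k) :
    Monotone (f - Pi.single k 1) := by
  intro a b hab
  rcases eq_or_ne a b with rfl | hne
  · exact le_rfl
  by_cases hb : b = k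
  · subst hb
    have := hk a (lt_of_le_of_ne hab hne)
    simp [hne]
    omega
  · simpa [Pi.single_apply, hb] using tsub_le_iff_right.mpr (le_add_right (hf hab))

theorem sum_Iic_add_pi_single {α : Type*} [LinearOrder α] [LocallyFiniteOrderBot α]
    (f : α → ℕ) (k t : α) :
    ∑ i ∈ Iic t, (f + Pi.single k 1 : α → ℕ) i = ∑ i ∈ Iic t, f i + if k ≤ t then 1 else 0 := by
  simp [sum_add_distrib, sum_pi_single']

section Exponents

variable {n : ℕ}

/-- Exponent vectors of partitions are stored increasingly, so these are sums of the smallest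
parts; for `|μ| = |λ|` this is `μ ⊴ λ`. -/
def PrefixDominated (lam μ : Fin n → ℕ) : Prop :=
  ∀ t, ∑ i ∈ Iic t, lam i ≤ ∑ i ∈ Iic t, μ i

def PermDominated (lam b : Fin n → ℕ) : Prop :=
  ∀ σ : Equiv.Perm (Fin n), PrefixDominated lam (b ∘ σ)

theorem PrefixDominated.sum_Iio_le {lam μ : Fin n → ℕ} (h : PrefixDominated lam μ) (t : Fin n) :
    ∑ i ∈ Iio t, lam i ≤ ∑ i ∈ Iio t, μ i := by
  by_cases ht : IsMin t
  · simp [Iio_eq_empty.mpr ht]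
  · simpa [Iic_pred_eq_Iio_of_not_isMin ht] using h (Order.pred t)

theorem permDominated_self {lam : Fin n → ℕ} (hlam : Monotone lam) : PermDominated lam lam :=
  fun σ t => by
    rw [Function.comp_def, ← sum_image fun x _ y _ h => σ.injective h]
    exact sum_Iic_le_sum_of_card_eq hlam t (card_image_of_injective _ σ.injective)

theorem PermDominated.comp_perm {lam b : Fin n → ℕ} (h : PermDominated lam b)
    (π : Equiv.Perm (Fin n)) : PermDominated lam (b ∘ π) :=
  fun σ => h (π * σ)

theorem borelMoveVec_add_single {ν : Fin n → ℕ} {i j : Fin n} (hij : i ≠ j) (hj : 0 < ν j) :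
    borelMoveVec n ν i j + Pi.single j 1 = ν + Pi.single i 1 := by
  funext t
  simp only [borelMoveVec, Pi.add_apply, Pi.single_apply]
  split_ifs <;> subst_vars <;> omega

theorem permDominated_borelMoveVec {lam ν : Fin n → ℕ} (h : PermDominated lam ν)
    {i j : Fin n} (hij : i ≠ j) (hlt : ν i < ν j) :
    PermDominated lam (borelMoveVec n ν i j) := by
  intro σ t
  set T := (Iic t).image σ
  have hsum (g : Fin n → ℕ) : ∑ x ∈ Iic t, (g ∘ σ) x = ∑ x ∈ T, g x :=
    (sum_image fun x _ y _ h => σ.injective h).symm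
  rw [hsum]
  by_cases hT : i ∈ T ∨ j ∉ T
  · have key : ∑ x ∈ T, borelMoveVec n ν i j x + (if j ∈ T then 1 else 0) =
        ∑ x ∈ T, ν x + (if i ∈ T then 1 else 0) := by
      simpa [sum_add_distrib, sum_pi_single'] using
        congrArg (fun g => ∑ x ∈ T, g x) (borelMoveVec_add_single hij (by omega))
    calc ∑ x ∈ Iic t, lam x ≤ ∑ x ∈ T, ν x := hsum ν ▸ h σ t
      _ ≤ _ := by
        rcases hT with hi | hj
        · rw [if_pos hi] at key
          split_ifs at key <;> omega
        · rw [if_neg hj] at key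
          omega
  · rw [not_or, not_not] at hT
    calc ∑ x ∈ Iic t, lam x ≤ ∑ x ∈ T, ν (Equiv.swap i j x) := hsum _ ▸ h (Equiv.swap i j * σ) t
      _ ≤ ∑ x ∈ T, borelMoveVec n ν i j x := sum_le_sum fun x hx => by
        have hxi : x ≠ i := ne_of_mem_of_not_mem hx hT.1
        rcases eq_or_ne x j with rfl | hxj
        · simp [borelMoveVec, hij.symm]
          omega
        · simp [borelMoveVec, Equiv.swap_apply_of_ne_of_ne hxi hxj, hxi, hxj]

end Exponents

inductive ShiftStep {n : ℕ} : (Fin n → ℕ) → (Fin n → ℕ) → Prop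
  | mul (ν : Fin n → ℕ) (i : Fin n) : ShiftStep ν (ν + Pi.single i 1)
  | borel {ν : Fin n → ℕ} {i j : Fin n} :
      Monotone ν → i < j → ν i < ν j → ShiftStep ν (borelMoveVec n ν i j)

section Reachability

variable {n : ℕ} {lam μ : Fin n → ℕ}

theorem exists_shiftStep_mul (hμ : Monotone μ) (hdom : PrefixDominated lam μ) {k : Fin n}
    (hgap : ∀ t < k, μ t < μ k) (hpos : 0 < μ k)
    (hstrict : ∀ t, k ≤ t → ∑ i ∈ Iic t, lam i < ∑ i ∈ Iic t, μ i) :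
    ∃ ν, Monotone ν ∧ PrefixDominated lam ν ∧
      ∑ t, ∑ i ∈ Iic t, ν i < ∑ t, ∑ i ∈ Iic t, μ i ∧ ShiftStep ν μ := by
  set ν := μ - Pi.single k 1
  have hνμ : ν + Pi.single k 1 = μ := by
    funext t
    rcases eq_or_ne t k with rfl | ht
    · simp [ν]
      omega
    · simp [ν, ht]
  have hsum (t : Fin n) :
      ∑ i ∈ Iic t, ν i + (if k ≤ t then 1 else 0) = ∑ i ∈ Iic t, μ i := by
    rw [← sum_Iic_add_pi_single, hνμ]
  refine ⟨ν, monotone_sub_pi_single hμ hgap, fun t => ?_, ?_, hνμ ▸ ShiftStep.mul ν k⟩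
  · have h₁ := hsum t
    have h₂ := hdom t
    split_ifs at h₁ with hkt
    · have := hstrict t hkt
      omega
    · omega
  · refine sum_lt_sum (fun t _ => (hsum t).symm ▸ le_self_add) ⟨k, mem_univ k, ?_⟩
    have := hsum k
    rw [if_pos le_rfl] at this
    omega

theorem exists_shiftStep_borel (hμ : Monotone μ) (hdom : PrefixDominated lam μ) {k j : Fin n}
    (hkj : k < j) (hgapk : ∀ t < k, μ t < μ k) (hgapj : ∀ t, j < t → μ j < μ t)
    (hpos : 0 < μ k) (hstrict : ∀ t, k ≤ t → t < j → ∑ i ∈ Iic t, lam i < ∑ i ∈ Iic t, μ i) :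
    ∃ ν, Monotone ν ∧ PrefixDominated lam ν ∧
      ∑ t, ∑ i ∈ Iic t, ν i < ∑ t, ∑ i ∈ Iic t, μ i ∧ ShiftStep ν μ := by
  set ν := μ - Pi.single k 1 + Pi.single j 1
  have hνμ : ν + Pi.single k 1 = μ + Pi.single j 1 := by
    funext t
    simp only [ν, Pi.add_apply, Pi.sub_apply, Pi.single_apply]
    split_ifs <;> subst_vars <;> omega
  have hsum (t : Fin n) : ∑ i ∈ Iic t, ν i + (if k ≤ t then 1 else 0) =
      ∑ i ∈ Iic t, μ i + (if j ≤ t then 1 else 0) := by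
    rw [← sum_Iic_add_pi_single, ← sum_Iic_add_pi_single, hνμ]
  have hν : Monotone ν := monotone_add_pi_single (monotone_sub_pi_single hμ hgapk) fun t hjt => by
    simpa [Pi.single_apply, hkj.ne', (hkj.trans hjt).ne'] using hgapj t hjt
  have hborel : borelMoveVec n ν k j = μ :=
    add_right_cancel ((borelMoveVec_add_single hkj.ne (by simp [ν])).trans hνμ)
  refine ⟨ν, hν, fun t => ?_, sum_lt_sum (fun t _ => ?_) ⟨k, mem_univ k, ?_⟩,
    hborel ▸ ShiftStep.borel hν hkj ?_⟩
  · have h₁ := hsum t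
    have h₂ := hdom t
    by_cases hkt : k ≤ t ∧ t < j
    · have := hstrict t hkt.1 hkt.2
      split_ifs at h₁ <;> omega
    · split_ifs at h₁ <;> omega
  · have h₁ := hsum t
    split_ifs at h₁ <;> omega
  · have h₁ := hsum k
    rw [if_pos le_rfl, if_neg (not_le.mpr hkj)] at h₁
    omega
  · have := hμ hkj.le
    simp [ν, hkj.ne, hkj.ne']
    omega

theorem PrefixDominated.apply_lt_of_tight (hlam : Monotone lam) (hμ : Monotone μ)
    (hdom : PrefixDominated lam μ) {j : Fin n} (hbefore : ∑ i ∈ Iio j, lam i < ∑ i ∈ Iio j, μ i)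
    (htight : ∑ i ∈ Iic j, μ i ≤ ∑ i ∈ Iic j, lam i) {t : Fin n} (hjt : j < t) : μ j < μ t := by
  have hj : ¬IsMax j := not_isMax_of_lt hjt
  have hsucc := hdom (Order.succ j)
  rw [← sum_Iio_add_eq_sum_Iic, ← sum_Iio_add_eq_sum_Iic, Iio_succ_eq_Iic_of_not_isMax hj]
    at hsucc
  rw [← sum_Iio_add_eq_sum_Iic, ← sum_Iio_add_eq_sum_Iic] at htight hsucc
  have := hlam (Order.le_succ j)
  have := hμ (Order.succ_le_of_lt hjt)
  omega

theorem exists_shiftStep_of_prefixDominated (hlam : Monotone lam) (hμ : Monotone μ)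
    (hdom : PrefixDominated lam μ) (hne : μ ≠ lam) :
    ∃ ν, Monotone ν ∧ PrefixDominated lam ν ∧
      ∑ t, ∑ i ∈ Iic t, ν i < ∑ t, ∑ i ∈ Iic t, μ i ∧ ShiftStep ν μ := by
  have hex : ∃ t, lam t < μ t := by
    by_contra! hle
    obtain ⟨t, ht⟩ := Function.ne_iff.mp hne
    exact (hdom t).not_gt <|
      sum_lt_sum (fun i _ => hle i) ⟨t, mem_Iic.mpr le_rfl, lt_of_le_of_ne (hle t) ht⟩
  obtain ⟨k, hkmin⟩ := exists_minimal_of_wellFoundedLT _ hex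
  obtain ⟨hk, hbelow⟩ := minimal_iff_forall_lt.mp hkmin
  have hgapk (t : Fin n) (ht : t < k) : μ t < μ k :=
    (not_lt.mp (hbelow ht)).trans_lt ((hlam ht.le).trans_lt hk)
  have hkstrict : ∑ i ∈ Iic k, lam i < ∑ i ∈ Iic k, μ i := by
    have : ∑ i ∈ Iio k, μ i ≤ ∑ i ∈ Iio k, lam i :=
      sum_le_sum fun t ht => not_lt.mp (hbelow (mem_Iio.mp ht))
    have := hdom.sum_Iio_le k
    rw [← sum_Iio_add_eq_sum_Iic, ← sum_Iio_add_eq_sum_Iic]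
    omega
  by_cases htight : ∃ t, k ≤ t ∧ ∑ i ∈ Iic t, μ i ≤ ∑ i ∈ Iic t, lam i
  · obtain ⟨j, hjmin⟩ := exists_minimal_of_wellFoundedLT _ htight
    obtain ⟨⟨hkle, hjtight⟩, hjfirst⟩ := minimal_iff_forall_lt.mp hjmin
    have hkj : k < j := lt_of_le_of_ne hkle (by rintro rfl; omega)
    have hstrict (t : Fin n) (hkt : k ≤ t) (htj : t < j) :
        ∑ i ∈ Iic t, lam i < ∑ i ∈ Iic t, μ i :=
      not_le.mp fun h => hjfirst htj ⟨hkt, h⟩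
    have hj : ¬IsMin j := not_isMin_of_lt hkj
    have hbefore : ∑ i ∈ Iio j, lam i < ∑ i ∈ Iio j, μ i := by
      rw [← Iic_pred_eq_Iio_of_not_isMin hj]
      exact hstrict _ (Order.le_pred_of_lt hkj) (Order.pred_lt_of_not_isMin hj)
    exact exists_shiftStep_borel hμ hdom hkj hgapk
      (fun t => hdom.apply_lt_of_tight hlam hμ hbefore hjtight) (by omega) hstrict
  · push Not at htight
    exact exists_shiftStep_mul hμ hdom hgapk (by omega) htight

theorem reflTransGen_shiftStep_of_prefixDominated (hlam : Monotone lam) (hμ : Monotone μ)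
    (hdom : PrefixDominated lam μ) : Relation.ReflTransGen ShiftStep lam μ := by
  induction h : ∑ t, ∑ i ∈ Iic t, μ i using Nat.strong_induction_on generalizing μ with
  | _ N ih =>
    by_cases hne : μ = lam
    · rw [hne]
    obtain ⟨ν, hν, hνdom, hlt, hstep⟩ := exists_shiftStep_of_prefixDominated hlam hμ hdom hne
    exact (ih _ (h ▸ hlt) hν hνdom rfl).tail hstep

end Reachability

section Ideals

variable {K : Type} [Field K] {n : ℕ}

theorem mon_add (a b : Fin n → ℕ) : mon K n (a + b) = mon K n a * mon K n b := by
  rw [mon, mon, mon, monomial_mul, one_mul]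
  congr
  ext i
  rfl

theorem rename_mon (π : Equiv.Perm (Fin n)) (a : Fin n → ℕ) :
    rename π (mon K n a) = mon K n (a ∘ π.symm) := by
  rw [mon, rename_monomial, mon]
  congr
  ext t
  exact Finsupp.mapDomain_equiv_apply (f := π) _ t

theorem mon_mem_of_reflTransGen {J : Ideal (MvPolynomial (Fin n) K)} (hJ : IsSSSI K n J)
    {ν μ : Fin n → ℕ} (h : Relation.ReflTransGen ShiftStep ν μ) (hν : mon K n ν ∈ J) :
    mon K n μ ∈ J := by
  induction h with
  | refl => exact hν
  | tail _ hstep ih =>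
    cases hstep with
    | mul i =>
      rw [mon_add]
      exact J.mul_mem_right _ ih
    | borel hmono hij hlt => exact hJ.2.2 _ hmono ih _ _ hij hlt

theorem mem_span_mon_iff {S : Set (Fin n → ℕ)} (hS : ∀ a ∈ S, ∀ b, a ≤ b → b ∈ S)
    {f : MvPolynomial (Fin n) K} :
    f ∈ Ideal.span (mon K n '' S) ↔ ∀ d ∈ f.support, ⇑d ∈ S := by
  rw [show mon K n = (fun d => monomial d 1) ∘ Finsupp.equivFunOnFinite.symm from rfl,
    Set.image_comp, Equiv.image_eq_preimage_symm, mem_ideal_span_monomial_image]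
  exact forall₂_congr fun d _ =>
    ⟨fun ⟨e, he, hed⟩ => hS _ he _ fun i => hed i, fun hd => ⟨d, hd, le_rfl⟩⟩

theorem isSymmetricIdeal_span_mon {S : Set (Fin n → ℕ)}
    (hS : ∀ a ∈ S, ∀ π : Equiv.Perm (Fin n), a ∘ π ∈ S) :
    IsSymmetricIdeal K n (Ideal.span (mon K n '' S)) := by
  intro π
  rw [Ideal.map_span, ← Set.image_comp]
  congr 1
  ext f
  constructor
  · rintro ⟨a, ha, rfl⟩
    exact ⟨a ∘ π.symm, hS a ha _, (rename_mon π a).symm⟩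
  · rintro ⟨a, ha, rfl⟩
    exact ⟨a ∘ π, hS a ha π, by simp [rename_mon, Function.comp_assoc]⟩

end Ideals

noncomputable def primaryIntersection (K : Type) [Field K] (n : ℕ) (lam : Fin n → ℕ) :
    Ideal (MvPolynomial (Fin n) K) :=
  ⨅ (j : Fin n), ⨅ (σ : Equiv.Perm (Fin n)),
    (Ideal.span {f : MvPolynomial (Fin n) K | ∃ i : Fin n, i ≤ j ∧ f = X (σ i)}) ^
      (∑ i ∈ Finset.Iic j, lam i)

section PrimaryIntersection

variable {K : Type} [Field K] {n : ℕ} {lam : Fin n → ℕ}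

theorem mem_primaryIntersection_iff {f : MvPolynomial (Fin n) K} :
    f ∈ primaryIntersection K n lam ↔ ∀ d ∈ f.support, PermDominated lam ⇑d := by
  have hgen (j : Fin n) (σ : Equiv.Perm (Fin n)) :
      {f : MvPolynomial (Fin n) K | ∃ i, i ≤ j ∧ f = X (σ i)} =
        X '' ↑((Iic j).map σ.toEmbedding) := by
    ext f
    simp only [Set.mem_ofPred_eq, coe_map, Equiv.coe_toEmbedding, coe_Iic, Set.image_image]
    exact ⟨fun ⟨i, hi, hf⟩ => ⟨i, hi, hf.symm⟩, fun ⟨i, hi, hf⟩ => ⟨i, hi, hf.symm⟩⟩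
  simp only [primaryIntersection, Ideal.mem_iInf, hgen, MvPolynomial.mem_span_X_pow_iff, sum_map]
  exact ⟨fun h d hd σ j => h j σ d hd, fun h j σ d hd => h d hd σ j⟩

theorem primaryIntersection_eq_span :
    primaryIntersection K n lam = Ideal.span (mon K n '' {b | PermDominated lam b}) := by
  ext f
  rw [mem_primaryIntersection_iff, mem_span_mon_iff]
  · rfl
  · exact fun a ha b hab σ t => (ha σ t).trans (sum_le_sum fun i _ => hab (σ i))

theorem mon_mem_primaryIntersection_iff {b : Fin n → ℕ} :
    mon K n b ∈ primaryIntersection K n lam ↔ PermDominated lam b := by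
  classical
  rw [mem_primaryIntersection_iff, mon, support_monomial, if_neg one_ne_zero]
  simp

theorem isSSSI_primaryIntersection : IsSSSI K n (primaryIntersection K n lam) := by
  refine ⟨⟨_, primaryIntersection_eq_span⟩, ?_, fun ν _ hν i j hij hlt => ?_⟩
  · rw [primaryIntersection_eq_span]
    exact isSymmetricIdeal_span_mon fun a ha π => ha.comp_perm π
  · rw [mon_mem_primaryIntersection_iff] at hν ⊢
    exact permDominated_borelMoveVec hν hij.ne hlt

theorem mon_mem_of_permDominated {J : Ideal (MvPolynomial (Fin n) K)} (hJ : IsSSSI K n J)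
    (hlam : Monotone lam) (hlamJ : mon K n lam ∈ J) {b : Fin n → ℕ} (hb : PermDominated lam b) :
    mon K n b ∈ J := by
  set π := Tuple.sort b
  have hsorted : mon K n (b ∘ π) ∈ J := mon_mem_of_reflTransGen hJ
    (reflTransGen_shiftStep_of_prefixDominated hlam (Tuple.monotone_sort b) (hb π)) hlamJ
  have hb : mon K n b = rename π (mon K n (b ∘ π)) := by
    rw [rename_mon, Function.comp_assoc, Equiv.self_comp_symm, Function.comp_id]
  rw [hb, ← hJ.2.1 π]
  exact Ideal.mem_map_of_mem _ hsorted

end PrimaryIntersection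

/-- For a partition `λ = (λ_1,…,λ_n)` with partial sums `a_j = λ_1 + ⋯ + λ_j`,
the principal Borel symmetric strongly shifted ideal `Sss({λ})` decomposes as
the intersection `∩_{j=1}^n ∩_{σ ∈ 𝔖_n} σ((x_1,…,x_j))^{a_j}`. -/
theorem principalBorel_primary_decomposition (K : Type) [Field K] (n : ℕ)
    (lam : Fin n → ℕ) (hlam : Monotone lam) :
    Sss K n {lam} =
      ⨅ (j : Fin n), ⨅ (σ : Equiv.Perm (Fin n)),
        (Ideal.span {f : MvPolynomial (Fin n) K |
            ∃ i : Fin n, i ≤ j ∧ f = X (σ i)}) ^ (∑ i ∈ Finset.Iic j, lam i) := by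
  change Sss K n {lam} = primaryIntersection K n lam
  refine le_antisymm (sInf_le ⟨isSSSI_primaryIntersection, ?_⟩) (le_sInf ?_)
  · rintro _ rfl
    exact mon_mem_primaryIntersection_iff.mpr (permDominated_self hlam)
  · rintro J ⟨hJ, hlamJ⟩
    rw [primaryIntersection_eq_span, Ideal.span_le]
    rintro _ ⟨b, hb, rfl⟩
    exact mon_mem_of_permDominated hJ hlam (hlamJ lam rfl) hb
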